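/- arXiv:2004.07015 — 6 statements merged into one kernel-verified Lean document; each statement's English description precedes it below -/
import Mathlib

section
/- Let X be a topological space with compact sets K, K' and a closed relation J ⊆ X × X such that for every compact C ⊆ X the sets J⁺(C) and J⁻(C) are closed, and such that in each of N factor spaces the causal diamonds J⁺_j(K_j) ∩ J⁻_j(K'_j) of compact sets are compact. Then in the product space with the componentwise relation, the set J⁺(K) ∩ J⁻(K') is compact for all compact K, K'. Concretely: if X = ∏_{j=1}^N X_j with componentwise closed relations J_j whose causal diamonds of compacts are compact, and K, K' ⊆ X are compact, then {r | ∃ p ∈ K, p ⪯ r and ∃ q ∈ K', r ⪯ q} is compact. -/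
open Set

/-- The forward cone of a compact set under a componentwise closed relation is closed. -/
lemma aux_closed_cone {N : ℕ} {X : Fin N → Type*}
    [∀ j, TopologicalSpace (X j)]
    (le : ∀ j, X j → X j → Prop)
    (hclosed : ∀ j, IsClosed {pq : X j × X j | le j pq.1 pq.2})
    (K : Set (∀ j, X j)) (hK : IsCompact K) :
    IsClosed {r : ∀ j, X j | ∃ p ∈ K, ∀ j, le j (p j) (r j)} := by
  haveI : CompactSpace K := isCompact_iff_compactSpace.mp hK
  have hS : IsClosed {pr : K × (∀ j, X j) | ∀ j, le j ((pr.1 : ∀ j, X j) j) (pr.2 j)} := by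
    have : {pr : K × (∀ j, X j) | ∀ j, le j ((pr.1 : ∀ j, X j) j) (pr.2 j)} =
        ⋂ j, (fun pr : K × (∀ j, X j) => (((pr.1 : ∀ j, X j) j), pr.2 j)) ⁻¹'
          {pq : X j × X j | le j pq.1 pq.2} := by
      ext pr; simp [Set.mem_iInter]
    rw [this]
    exact isClosed_iInter fun j => (hclosed j).preimage
      (((continuous_apply j).comp (continuous_subtype_val.comp continuous_fst)).prodMk
        ((continuous_apply j).comp continuous_snd))
  have := isClosedMap_snd_of_compactSpace (X := K) _ hS
  convert this using 1
  ext r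
  constructor
  · rintro ⟨p, hpK, hp⟩
    exact ⟨(⟨p, hpK⟩, r), hp, rfl⟩
  · rintro ⟨⟨p, r'⟩, hp, rfl⟩
    exact ⟨p, p.2, hp⟩

/-- If in each factor space the causal diamonds of compact sets are compact (the relations
being closed, reflexive and transitive), then in the product space with the componentwise
relation, `J⁺(K) ∩ J⁻(K')` is compact for all compact `K, K'`. -/
theorem stmt3 {N : ℕ} {X : Fin N → Type*}
    [∀ j, TopologicalSpace (X j)] [∀ j, T2Space (X j)]
    [∀ j, FirstCountableTopology (X j)]
    (le : ∀ j, X j → X j → Prop)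
    (hclosed : ∀ j, IsClosed {pq : X j × X j | le j pq.1 pq.2})
    (hrefl : ∀ j, ∀ p : X j, le j p p)
    (htrans : ∀ j, ∀ p q r : X j, le j p q → le j q r → le j p r)
    (hdiamond : ∀ j, ∀ C C' : Set (X j), IsCompact C → IsCompact C' →
      IsCompact {r : X j | (∃ p ∈ C, le j p r) ∧ ∃ q ∈ C', le j r q}) :
    ∀ K K' : Set (∀ j, X j), IsCompact K → IsCompact K' →
      IsCompact {r : ∀ j, X j |
        (∃ p ∈ K, ∀ j, le j (p j) (r j)) ∧ ∃ q ∈ K', ∀ j, le j (r j) (q j)} := by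
  intro K K' hK hK'
  -- closedness of the diamond
  have hcl₁ := aux_closed_cone le hclosed K hK
  -- backward cone: apply forward-cone lemma to reversed relation
  have hcl₂ := aux_closed_cone (fun j a b => le j b a)
    (fun j => by
      exact (hclosed j).preimage (continuous_swap (X := X j) (Y := X j))) K' hK'
  have hclosedSet : IsClosed {r : ∀ j, X j |
      (∃ p ∈ K, ∀ j, le j (p j) (r j)) ∧ ∃ q ∈ K', ∀ j, le j (r j) (q j)} :=
    hcl₁.inter hcl₂
  -- the diamond sits inside a compact box
  have hbox : IsCompact (Set.pi Set.univ fun j =>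
      {r : X j | (∃ p ∈ (fun f => f j) '' K, le j p r) ∧
        ∃ q ∈ (fun f => f j) '' K', le j r q}) :=
    isCompact_univ_pi fun j => hdiamond j _ _ (hK.image (continuous_apply j))
      (hK'.image (continuous_apply j))
  refine hbox.of_isClosed_subset hclosedSet ?_
  rintro r ⟨⟨p, hpK, hp⟩, q, hqK, hq⟩ j -
  exact ⟨⟨p j, ⟨p, hpK, rfl⟩, hp j⟩, ⟨q j, ⟨q, hqK, rfl⟩, hq j⟩⟩
end

section
/- Let X be a Polish space and ⪯ a closed partial order on X. Define, for Borel probability measures μ, ν on X, the relation μ ⪯ ν iff there exists a Borel probability measure ω on X × X whose first marginal is μ, whose second marginal is ν, and which is concentrated on the graph of ⪯ (i.e. ω({(p,q) | p ⪯ q}) = 1). Then this relation on the space of Borel probability measures is reflexive and transitive. -/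
open MeasureTheory ProbabilityTheory

/-- Causal precedence between probability measures: there is a coupling concentrated
on the graph of the order. -/
def CausalPrec {X : Type*} [MeasurableSpace X] (r : X → X → Prop)
    (μ ν : Measure X) : Prop :=
  ∃ ω : Measure (X × X), IsProbabilityMeasure ω ∧
    ω.map Prod.fst = μ ∧ ω.map Prod.snd = ν ∧ ω {pq : X × X | r pq.1 pq.2} = 1

/-- For a closed partial order on a Polish space, the induced causal precedence relation
on Borel probability measures is reflexive and transitive. -/
theorem stmt4 {X : Type*} [TopologicalSpace X] [PolishSpace X]
    [MeasurableSpace X] [BorelSpace X]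
    (r : X → X → Prop)
    (hrefl : ∀ p : X, r p p)
    (hantisymm : ∀ p q : X, r p q → r q p → p = q)
    (htrans : ∀ p q s : X, r p q → r q s → r p s)
    (hclosed : IsClosed {pq : X × X | r pq.1 pq.2}) :
    (∀ μ : Measure X, IsProbabilityMeasure μ → CausalPrec r μ μ) ∧
    (∀ μ ν ρ : Measure X, IsProbabilityMeasure μ → IsProbabilityMeasure ν →
      IsProbabilityMeasure ρ →
      CausalPrec r μ ν → CausalPrec r ν ρ → CausalPrec r μ ρ) := by
  have hS : MeasurableSet {pq : X × X | r pq.1 pq.2} := hclosed.measurableSet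
  have hdiag : Measurable fun x : X => (x, x) := measurable_id.prodMk measurable_id
  constructor
  · intro μ hμ
    refine ⟨μ.map (fun x => (x, x)), Measure.isProbabilityMeasure_map hdiag.aemeasurable, ?_, ?_, ?_⟩
    · rw [Measure.map_map measurable_fst hdiag]
      exact Measure.map_id
    · rw [Measure.map_map measurable_snd hdiag]
      exact Measure.map_id
    · rw [Measure.map_apply hdiag hS]
      have : (fun x : X => (x, x)) ⁻¹' {pq : X × X | r pq.1 pq.2} = Set.univ := by
        ext x; simp [hrefl x]
      rw [this]; exact measure_univ
  · rintro μ ν ρ hμ hν hρ ⟨ω1, hω1p, hω1f, hω1s, hω1r⟩ ⟨ω2, hω2p, hω2f, hω2s, hω2r⟩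
    rcases isEmpty_or_nonempty X with hX | hX
    · exfalso
      have h := hν.measure_univ
      rw [Set.univ_eq_empty_iff.mpr hX] at h
      simp at h
    set ω1' : Measure (X × X) := ω1.map Prod.swap with hω1'def
    haveI : IsProbabilityMeasure ω1' := Measure.isProbabilityMeasure_map measurable_swap.aemeasurable
    have hfst1 : ω1'.fst = ν := by
      rw [Measure.fst, hω1'def, Measure.map_map measurable_fst measurable_swap]
      exact hω1s
    have hfst2 : ω2.fst = ν := by rw [Measure.fst]; exact hω2f
    set κ1 := ω1'.condKernel with hκ1
    set κ2 := ω2.condKernel with hκ2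
    have hd1 : ν ⊗ₘ κ1 = ω1' := by rw [← hfst1]; exact ω1'.disintegrate κ1
    have hd2 : ν ⊗ₘ κ2 = ω2 := by rw [← hfst2]; exact ω2.disintegrate κ2
    set m : Measure (X × (X × X)) := ν ⊗ₘ (κ1 ×ₖ κ2) with hm
    haveI : IsProbabilityMeasure m := by
      constructor
      rw [hm, Measure.compProd_apply_univ]
      exact measure_univ
    have hmap1 : Measurable fun p : X × (X × X) => (p.1, p.2.1) :=
      measurable_fst.prodMk (measurable_fst.comp measurable_snd)
    have hmap2 : Measurable fun p : X × (X × X) => (p.1, p.2.2) :=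
      measurable_fst.prodMk (measurable_snd.comp measurable_snd)
    have hmap3 : Measurable fun p : X × (X × X) => (p.2.1, p.2.2) :=
      (measurable_fst.comp measurable_snd).prodMk (measurable_snd.comp measurable_snd)
    -- projection to first two coordinates
    have hproj1 : m.map (fun p => (p.1, p.2.1)) = ν ⊗ₘ κ1 := by
      ext s hs
      rw [Measure.map_apply hmap1 hs, hm, Measure.compProd_apply (hmap1 hs),
        Measure.compProd_apply hs]
      refine lintegral_congr fun y => ?_
      rw [Kernel.prod_apply]
      have : (Prod.mk y ⁻¹' ((fun p : X × (X × X) => (p.1, p.2.1)) ⁻¹' s)) =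
          (Prod.mk y ⁻¹' s) ×ˢ Set.univ := by
        ext q; simp [Set.mem_preimage]
      rw [this, Measure.prod_prod, measure_univ, mul_one]
    have hproj2 : m.map (fun p => (p.1, p.2.2)) = ν ⊗ₘ κ2 := by
      ext s hs
      rw [Measure.map_apply hmap2 hs, hm, Measure.compProd_apply (hmap2 hs),
        Measure.compProd_apply hs]
      refine lintegral_congr fun y => ?_
      rw [Kernel.prod_apply]
      have : (Prod.mk y ⁻¹' ((fun p : X × (X × X) => (p.1, p.2.2)) ⁻¹' s)) =
          Set.univ ×ˢ (Prod.mk y ⁻¹' s) := by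
        ext q; simp [Set.mem_preimage]
      rw [this, Measure.prod_prod, measure_univ, one_mul]
    refine ⟨m.map (fun p => (p.2.1, p.2.2)), Measure.isProbabilityMeasure_map hmap3.aemeasurable,
      ?_, ?_, ?_⟩
    · rw [Measure.map_map measurable_fst hmap3]
      have : (Prod.fst ∘ fun p : X × (X × X) => (p.2.1, p.2.2)) =
          (Prod.snd ∘ fun p : X × (X × X) => (p.1, p.2.1)) := rfl
      rw [this, ← Measure.map_map measurable_snd hmap1, hproj1, hd1, hω1'def,
        Measure.map_map measurable_snd measurable_swap]
      exact hω1f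
    · rw [Measure.map_map measurable_snd hmap3]
      have : (Prod.snd ∘ fun p : X × (X × X) => (p.2.1, p.2.2)) =
          (Prod.snd ∘ fun p : X × (X × X) => (p.1, p.2.2)) := rfl
      rw [this, ← Measure.map_map measurable_snd hmap2, hproj2, hd2]
      exact hω2s
    · -- concentration
      have hS' : MeasurableSet {q : X × X | r q.2 q.1} := measurable_swap hS
      have h1ae : ∀ᵐ y ∂ν, ∀ᵐ x ∂(κ1 y), r x y := by
        have hone : ω1' {q : X × X | r q.2 q.1} = 1 := by
          have he : {q : X × X | r q.2 q.1} = Prod.swap ⁻¹' {pq : X × X | r pq.1 pq.2} := rfl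
          rw [hω1'def, he, Measure.map_apply measurable_swap (measurable_swap hS)]
          exact hω1r
        have : ∀ᵐ q ∂(ν ⊗ₘ κ1), r q.2 q.1 := by
          rw [hd1, ae_iff]
          have he : {q : X × X | ¬ r q.2 q.1} = {q : X × X | r q.2 q.1}ᶜ := rfl
          rw [he]
          exact (prob_compl_eq_zero_iff hS').mpr hone
        exact Measure.ae_ae_of_ae_compProd this
      have h2ae : ∀ᵐ y ∂ν, ∀ᵐ z ∂(κ2 y), r y z := by
        have : ∀ᵐ q ∂(ν ⊗ₘ κ2), r q.1 q.2 := by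
          rw [hd2, ae_iff]
          have he : {q : X × X | ¬ r q.1 q.2} = {q : X × X | r q.1 q.2}ᶜ := rfl
          rw [he]
          exact (prob_compl_eq_zero_iff hS).mpr hω2r
        exact Measure.ae_ae_of_ae_compProd this
      have hsec : ∀ᵐ y ∂ν, ((κ1 ×ₖ κ2) y) {q : X × X | r q.1 q.2} = 1 := by
        filter_upwards [h1ae, h2ae] with y h1 h2
        have hsub : {x : X | r x y} ×ˢ {z : X | r y z} ⊆ {q : X × X | r q.1 q.2} := by
          rintro ⟨x, z⟩ ⟨hx, hz⟩
          exact htrans x y z hx hz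
        have hx1 : (κ1 y) {x : X | r x y} = 1 := by
          have hms : MeasurableSet {x : X | r x y} :=
            (measurable_id.prodMk measurable_const) hS
          refine (prob_compl_eq_zero_iff hms).mp ?_
          have he : {x : X | r x y}ᶜ = {x : X | ¬ r x y} := rfl
          rw [he, ← ae_iff]
          exact h1
        have hz1 : (κ2 y) {z : X | r y z} = 1 := by
          have hms : MeasurableSet {z : X | r y z} :=
            (measurable_const.prodMk measurable_id) hS
          refine (prob_compl_eq_zero_iff hms).mp ?_
          have he : {z : X | r y z}ᶜ = {z : X | ¬ r y z} := rfl
          rw [he, ← ae_iff]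
          exact h2
        have hge : ((κ1 ×ₖ κ2) y) {q : X × X | r q.1 q.2} ≥ 1 := by
          calc ((κ1 ×ₖ κ2) y) {q : X × X | r q.1 q.2}
              ≥ ((κ1 ×ₖ κ2) y) ({x : X | r x y} ×ˢ {z : X | r y z}) := measure_mono hsub
            _ = 1 := by rw [Kernel.prod_apply, Measure.prod_prod, hx1, hz1, mul_one]
        exact le_antisymm prob_le_one hge
      rw [Measure.map_apply hmap3 hS]
      have hpre : (fun p : X × (X × X) => (p.2.1, p.2.2)) ⁻¹' {pq : X × X | r pq.1 pq.2} =
          Prod.snd ⁻¹' {q : X × X | r q.1 q.2} := rfl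
      rw [hpre, hm, Measure.compProd_apply (measurable_snd hS)]
      have : ∫⁻ y, ((κ1 ×ₖ κ2) y) (Prod.mk y ⁻¹' (Prod.snd ⁻¹' {q : X × X | r q.1 q.2})) ∂ν
          = ∫⁻ _, 1 ∂ν := by
        refine lintegral_congr_ae ?_
        filter_upwards [hsec] with y hy
        simpa using hy
      rw [this]
      simp
end

section
/- Let X be a Polish space with a closed preorder ⪯ and let μ, ν be Borel probability measures on X. If there exists a causal coupling of μ and ν (a coupling concentrated on the graph of ⪯), then for every Borel set F ⊆ X which is a future set (i.e. p ∈ F and p ⪯ q implies q ∈ F) one has μ(F) ≤ ν(F). -/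
open MeasureTheory

/-- If there is a causal coupling of `μ` and `ν` (for a closed preorder on a Polish
space), then `μ F ≤ ν F` for every Borel future set `F`. -/
theorem stmt5 {X : Type*} [TopologicalSpace X] [PolishSpace X]
    [MeasurableSpace X] [BorelSpace X]
    (r : X → X → Prop)
    (hrefl : ∀ p : X, r p p)
    (htrans : ∀ p q s : X, r p q → r q s → r p s)
    (hclosed : IsClosed {pq : X × X | r pq.1 pq.2})
    (μ ν : Measure X) [IsProbabilityMeasure μ] [IsProbabilityMeasure ν]
    (hcoupling : ∃ ω : Measure (X × X), IsProbabilityMeasure ω ∧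
      ω.map Prod.fst = μ ∧ ω.map Prod.snd = ν ∧ ω {pq : X × X | r pq.1 pq.2} = 1) :
    ∀ F : Set X, MeasurableSet F → (∀ p ∈ F, ∀ q : X, r p q → q ∈ F) →
      μ F ≤ ν F := by
  intro F hF hfut
  obtain ⟨ω, hprob, hfst, hsnd, hR⟩ := hcoupling
  set R : Set (X × X) := {pq : X × X | r pq.1 pq.2} with hRdef
  have hRc : ω Rᶜ = 0 := by
    have := measure_univ (μ := ω)
    rw [prob_compl_eq_zero_iff (hclosed.measurableSet)]
    exact hR
  have h1 : μ F = ω (Prod.fst ⁻¹' F) := by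
    rw [← hfst, Measure.map_apply measurable_fst hF]
  have h2 : ν F = ω (Prod.snd ⁻¹' F) := by
    rw [← hsnd, Measure.map_apply measurable_snd hF]
  rw [h1, h2]
  have hsub : Prod.fst ⁻¹' F ∩ R ⊆ Prod.snd ⁻¹' F := by
    rintro ⟨p, q⟩ ⟨hp, hr⟩
    exact hfut p hp q hr
  calc ω (Prod.fst ⁻¹' F) ≤ ω (Prod.fst ⁻¹' F ∩ R) + ω Rᶜ := by
        apply (measure_mono _).trans (measure_union_le _ _)
        intro x hx
        by_cases hxR : x ∈ R
        · exact Or.inl ⟨hx, hxR⟩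
        · exact Or.inr hxR
    _ = ω (Prod.fst ⁻¹' F ∩ R) := by rw [hRc, add_zero]
    _ ≤ ω (Prod.snd ⁻¹' F) := measure_mono hsub
end

section
/- Let X be a Polish space with a closed preorder ⪯ and μ, ν Borel probability measures on X. Suppose that for every compact set K ⊆ supp μ one has μ(K) ≤ ν(J⁺(K)), where J⁺(K) = {q | ∃ p ∈ K, p ⪯ q}. Then for every compact set K ⊆ X one has μ(J⁺(K)) ≤ ν(J⁺(K)). (Key ingredients: inner regularity (Ulam tightness) of μ on the Borel set J⁺(K) ∩ supp μ, transitivity of ⪯ giving J⁺(J⁺(K)) = J⁺(K), and measurability of J⁺(K) for compact K.) -/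
open MeasureTheory
open Set Filter Topology
open scoped ENNReal


lemma stmt7_tight {X : Type*} [TopologicalSpace X] [PolishSpace X]
    [MeasurableSpace X] [BorelSpace X] (μ : Measure X) [IsProbabilityMeasure μ]
    {ε : ℝ≥0∞} (hε : ε ≠ 0) :
    ∃ K : Set X, IsCompact K ∧ μ Kᶜ ≤ ε := by
  letI := TopologicalSpace.upgradeIsCompletelyMetrizable X
  rcases isEmpty_or_nonempty X with hX | hX
  · exact ⟨∅, isCompact_empty, by simp [Set.eq_empty_of_isEmpty]⟩
  obtain ⟨u, hu⟩ := TopologicalSpace.exists_dense_seq X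
  have key : ∀ n : ℕ, ∃ m : ℕ,
      μ (⋃ i ∈ Finset.range m, Metric.closedBall (u i) (1/(n+1)))ᶜ ≤ ε / 2^(n+1) := by
    intro n
    set δ : ℝ≥0∞ := ε / 2^(n+1) with hδ
    have hδ0 : δ ≠ 0 := by
      simp [hδ, ENNReal.div_eq_zero_iff, hε, (by positivity : (0:ℝ≥0∞) < 2^(n+1)).ne']
    rcases le_or_gt 1 δ with hδ1 | hδ1
    · exact ⟨0, le_trans prob_le_one hδ1⟩
    have huniv : (⋃ i, Metric.closedBall (u i) (1/(n+1))) = univ := by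
      ext x
      simp only [mem_iUnion, mem_univ, iff_true]
      obtain ⟨i, hy⟩ := hu.exists_mem_open Metric.isOpen_ball
        (⟨x, Metric.mem_ball_self (by positivity)⟩ : (Metric.ball x (1/(n+1))).Nonempty)
      exact ⟨i, Metric.mem_closedBall.2 (le_of_lt (Metric.mem_ball'.1 hy))⟩
    have htend := tendsto_measure_iUnion_accumulate (μ := μ)
      (f := fun i => Metric.closedBall (u i) (1/(n+1)))
    rw [huniv, measure_univ] at htend
    have hlt : (1 : ℝ≥0∞) - δ < 1 := ENNReal.sub_lt_self ENNReal.one_ne_top one_ne_zero hδ0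
    obtain ⟨m, hm⟩ := (htend.eventually_const_lt hlt).exists
    refine ⟨m + 1, ?_⟩
    have hacc : Set.accumulate (fun i => Metric.closedBall (u i) (1/(n+1))) m
        = ⋃ i ∈ Finset.range (m+1), Metric.closedBall (u i) (1/(n+1)) := by
      ext x; simp [Set.mem_accumulate, Nat.lt_succ_iff]
    rw [hacc] at hm
    have hmeas : MeasurableSet (⋃ i ∈ Finset.range (m+1), Metric.closedBall (u i) (1/(n+1))) := by
      exact (Finset.range (m+1)).measurableSet_biUnion fun i _ => Metric.isClosed_closedBall.measurableSet
    rw [measure_compl hmeas (measure_ne_top μ _), measure_univ]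
    calc (1:ℝ≥0∞) - μ _ ≤ 1 - (1 - δ) := tsub_le_tsub_left hm.le 1
    _ ≤ δ := by
        rw [ENNReal.sub_sub_cancel ENNReal.one_ne_top hδ1.le]
  choose m hm using key
  set S : ℕ → Set X := fun n => ⋃ i ∈ Finset.range (m n), Metric.closedBall (u i) (1/(n+1)) with hS
  have hSclosed : ∀ n, IsClosed (S n) := fun n =>
    Set.Finite.isClosed_biUnion (Finset.range (m n)).finite_toSet fun i _ => Metric.isClosed_closedBall
  set T : Set X := ⋂ n, S n with hT
  have hTclosed : IsClosed T := isClosed_iInter hSclosed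
  have hTB : TotallyBounded T := by
    rw [Metric.totallyBounded_iff]
    intro δ hδ
    obtain ⟨n, hn⟩ := exists_nat_one_div_lt hδ
    refine ⟨u '' (Finset.range (m n)), (Set.toFinite _), ?_⟩
    intro x hx
    have hxS : x ∈ S n := Set.mem_iInter.1 hx n
    simp only [hS, mem_iUnion, exists_prop] at hxS
    obtain ⟨i, hi, hxi⟩ := hxS
    exact Set.mem_biUnion (Set.mem_image_of_mem u (by simpa using hi))
      (Metric.mem_ball.2 (lt_of_le_of_lt (Metric.mem_closedBall.1 hxi) hn))
  refine ⟨T, hTB.isCompact_of_isClosed hTclosed, ?_⟩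
  have hTc : Tᶜ = ⋃ n, (S n)ᶜ := by
    simp [hT, Set.compl_iInter]
  rw [hTc]
  refine le_trans (measure_iUnion_le _) ?_
  refine le_trans (ENNReal.tsum_le_tsum fun n => hm n) ?_
  have : ∀ n : ℕ, ε / 2^(n+1) = ε * (2⁻¹ : ℝ≥0∞)^(n+1) := by
    intro n
    rw [div_eq_mul_inv, ENNReal.inv_pow]
  simp_rw [this, pow_succ']
  rw [ENNReal.tsum_mul_left, ENNReal.tsum_mul_left, ENNReal.tsum_geometric]
  rw [ENNReal.one_sub_inv_two, inv_inv, ENNReal.inv_mul_cancel two_ne_zero ENNReal.ofNat_ne_top,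
    mul_one]


/-- If `μ(K) ≤ ν(J⁺(K))` for every compact `K ⊆ supp μ`, then
`μ(J⁺(K)) ≤ ν(J⁺(K))` for every compact `K ⊆ X`. -/
theorem stmt7 {X : Type*} [TopologicalSpace X] [PolishSpace X]
    [MeasurableSpace X] [BorelSpace X]
    (r : X → X → Prop)
    (hrefl : ∀ p : X, r p p)
    (htrans : ∀ p q s : X, r p q → r q s → r p s)
    (hclosed : IsClosed {pq : X × X | r pq.1 pq.2})
    (hJborel : ∀ K : Set X, IsCompact K → MeasurableSet {q : X | ∃ p ∈ K, r p q})
    (μ ν : Measure X) [IsProbabilityMeasure μ] [IsProbabilityMeasure ν]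
    (h : ∀ K : Set X, IsCompact K → K ⊆ {x : X | ∀ U : Set X, IsOpen U → x ∈ U → 0 < μ U} → μ K ≤ ν {q : X | ∃ p ∈ K, r p q}) :
    ∀ K : Set X, IsCompact K →
      μ {q : X | ∃ p ∈ K, r p q} ≤ ν {q : X | ∃ p ∈ K, r p q} := by
  intro K hK
  letI := TopologicalSpace.upgradeIsCompletelyMetrizable X
  set A : Set X := {q : X | ∃ p ∈ K, r p q} with hA
  have hAmeas : MeasurableSet A := hJborel K hK
  set Sp : Set X := {x : X | ∀ U : Set X, IsOpen U → x ∈ U → 0 < μ U} with hSp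
  -- the complement of the support is null
  have hSpc : μ Spᶜ = 0 := by
    have h1 : Spᶜ = ⋃₀ {U : Set X | IsOpen U ∧ μ U = 0} := by
      ext x
      simp only [Set.mem_compl_iff, hSp, Set.mem_setOf_eq, Set.mem_sUnion, not_forall]
      constructor
      · rintro ⟨U, hUo, hxU, hU⟩
        exact ⟨U, ⟨hUo, by simpa using hU⟩, hxU⟩
      · rintro ⟨U, ⟨hUo, hU0⟩, hxU⟩
        exact ⟨U, hUo, hxU, by simp [hU0]⟩
    obtain ⟨T, hTc, hTsub, hTU⟩ := TopologicalSpace.isOpen_sUnion_countable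
      {U : Set X | IsOpen U ∧ μ U = 0} (fun U hU => hU.1)
    rw [h1, ← hTU]
    exact (measure_sUnion_null_iff hTc).2 fun U hU => (hTsub hU).2
  -- reduce to A ∩ Sp
  have step1 : μ A ≤ μ (A ∩ Sp) := by
    have : A ⊆ (A ∩ Sp) ∪ Spᶜ := by
      intro x hx
      by_cases hxs : x ∈ Sp
      · exact Or.inl ⟨hx, hxs⟩
      · exact Or.inr hxs
    calc μ A ≤ μ ((A ∩ Sp) ∪ Spᶜ) := measure_mono this
    _ ≤ μ (A ∩ Sp) + μ Spᶜ := measure_union_le _ _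
    _ = μ (A ∩ Sp) := by rw [hSpc, add_zero]
  refine le_trans step1 ?_
  -- Sp is closed, so A ∩ Sp is measurable
  have hSpclosed : IsClosed Sp := by
    rw [← isOpen_compl_iff]
    rw [show Spᶜ = ⋃₀ {U : Set X | IsOpen U ∧ μ U = 0} from ?_]
    · exact isOpen_sUnion fun U hU => hU.1
    · ext x
      simp only [Set.mem_compl_iff, hSp, Set.mem_setOf_eq, Set.mem_sUnion, not_forall]
      constructor
      · rintro ⟨U, hUo, hxU, hU⟩
        exact ⟨U, ⟨hUo, by simpa using hU⟩, hxU⟩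
      · rintro ⟨U, ⟨hUo, hU0⟩, hxU⟩
        exact ⟨U, hUo, hxU, by simp [hU0]⟩
  have hASmeas : MeasurableSet (A ∩ Sp) := hAmeas.inter hSpclosed.measurableSet
  -- ε-argument
  refine ENNReal.le_of_forall_pos_le_add fun ε hε hν => ?_
  have hε2 : (ε : ℝ≥0∞) / 2 ≠ 0 := by
    simp [ENNReal.div_eq_zero_iff, hε.ne']
  obtain ⟨F, hFsub, hFclosed, hFlt⟩ :=
    hASmeas.exists_isClosed_lt_add (measure_ne_top μ _) hε2
  obtain ⟨T, hTcomp, hTle⟩ := stmt7_tight μ hε2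
  set C : Set X := F ∩ T with hC
  have hCcomp : IsCompact C := hTcomp.inter_left hFclosed
  have hCsub : C ⊆ Sp := fun x hx => (hFsub hx.1).2
  have hCA : C ⊆ A := fun x hx => (hFsub hx.1).1
  have hJC : {q : X | ∃ p ∈ C, r p q} ⊆ A := by
    rintro q ⟨p, hpC, hpq⟩
    obtain ⟨k, hk, hkp⟩ := hCA hpC
    exact ⟨k, hk, htrans k p q hkp hpq⟩
  have hmain : μ C ≤ ν A := le_trans (h C hCcomp hCsub) (measure_mono hJC)
  have hF : μ F ≤ μ C + ε / 2 := by
    have : F ⊆ C ∪ Tᶜ := by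
      intro x hx
      by_cases hxT : x ∈ T
      · exact Or.inl ⟨hx, hxT⟩
      · exact Or.inr hxT
    calc μ F ≤ μ (C ∪ Tᶜ) := measure_mono this
    _ ≤ μ C + μ Tᶜ := measure_union_le _ _
    _ ≤ μ C + ε / 2 := by gcongr
  calc μ (A ∩ Sp) ≤ μ F + ε / 2 := hFlt.le
  _ ≤ (μ C + ε / 2) + ε / 2 := by gcongr
  _ ≤ (ν A + ε / 2) + ε / 2 := by gcongr
  _ = ν A + ε := by rw [add_assoc, ENNReal.add_halves]
end

section
/- For any two vectors u, w ∈ ℂ³, the inequality Σ_{k=1}^{3} (u†S_k u − w†S_k w)² ≤ (‖u‖² + ‖w‖²)² holds, where S₁, S₂, S₃ are the spin-1 rotation generator matrices S₁ = [[0,0,0],[0,0,−i],[0,i,0]], S₂ = [[0,0,i],[0,0,0],[−i,0,0]], S₃ = [[0,−i,0],[i,0,0],[0,0,0]]. (Note u†S_k u is real for Hermitian S_k.) -/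
open Matrix Complex

lemma csaux (p1 p2 p3 q1 q2 q3 A B : ℝ) (hA : 0 ≤ A) (hB : 0 ≤ B)
    (hp : p1^2+p2^2+p3^2 ≤ A^2) (hq : q1^2+q2^2+q3^2 ≤ B^2) :
    (p1-q1)^2+(p2-q2)^2+(p3-q3)^2 ≤ (A+B)^2 := by
  have hs : (p1*q1+p2*q2+p3*q3)^2 ≤ (A*B)^2 := by
    nlinarith [sq_nonneg (p1*q2 - p2*q1), sq_nonneg (p1*q3 - p3*q1), sq_nonneg (p2*q3 - p3*q2),
      sq_nonneg p1, sq_nonneg p2, sq_nonneg p3, sq_nonneg q1, sq_nonneg q2, sq_nonneg q3,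
      mul_le_mul hp hq (by positivity) (by positivity)]
  have h2 : -(A*B) ≤ p1*q1+p2*q2+p3*q3 := by
    nlinarith [sq_nonneg (p1*q1+p2*q2+p3*q3 + A*B), mul_nonneg hA hB]
  nlinarith [mul_nonneg hA hB]

lemma cross_bound (a0 a1 a2 b0 b1 b2 : ℝ) :
    (2*(a1*b2 - a2*b1))^2 + (2*(a2*b0 - a0*b2))^2 + (2*(a0*b1 - a1*b0))^2
    ≤ (a0^2+a1^2+a2^2+b0^2+b1^2+b2^2)^2 := by
  nlinarith [sq_nonneg (a0^2+a1^2+a2^2-b0^2-b1^2-b2^2), sq_nonneg (2*(a0*b0+a1*b1+a2*b2))]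

/-- The spin-1 rotation generators. -/
noncomputable def spinGen : Fin 3 → Matrix (Fin 3) (Fin 3) ℂ :=
  ![!![0, 0, 0; 0, 0, -I; 0, I, 0],
    !![0, 0, I; 0, 0, 0; -I, 0, 0],
    !![0, -I, 0; I, 0, 0; 0, 0, 0]]

set_option maxHeartbeats 2000000 in
/-- For any `u, w ∈ ℂ³`:
`Σ_k (u†S_k u − w†S_k w)² ≤ (‖u‖² + ‖w‖²)²`. -/
theorem stmt10 (u w : Fin 3 → ℂ) :
    ∑ k : Fin 3,
      ((star u ⬝ᵥ (spinGen k).mulVec u).re - (star w ⬝ᵥ (spinGen k).mulVec w).re) ^ 2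
    ≤ ((∑ i : Fin 3, Complex.normSq (u i)) + ∑ i : Fin 3, Complex.normSq (w i)) ^ 2 := by
  simp only [spinGen, Fin.sum_univ_three, Matrix.mulVec, dotProduct, Fin.isValue,
    Matrix.cons_val', Matrix.cons_val_zero, Matrix.cons_val_one, Matrix.head_cons,
    Matrix.cons_val_two, Matrix.tail_cons, Matrix.empty_val', Matrix.cons_val_fin_one,
    Matrix.head_fin_const, Matrix.of_apply, Pi.star_apply, Complex.normSq_apply,
    RCLike.star_def, zero_mul, mul_zero, add_zero, zero_add, neg_mul, mul_neg]
  simp only [Complex.add_re, Complex.sub_re, Complex.neg_re, Complex.mul_re, Complex.mul_im,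
    Complex.conj_re, Complex.conj_im, Complex.I_re, Complex.I_im, mul_zero, zero_mul, mul_one,
    one_mul, sub_zero, zero_sub, neg_neg]
  have h := csaux
    (2*((u 1).re*(u 2).im - (u 2).re*(u 1).im))
    (2*((u 2).re*(u 0).im - (u 0).re*(u 2).im))
    (2*((u 0).re*(u 1).im - (u 1).re*(u 0).im))
    (2*((w 1).re*(w 2).im - (w 2).re*(w 1).im))
    (2*((w 2).re*(w 0).im - (w 0).re*(w 2).im))
    (2*((w 0).re*(w 1).im - (w 1).re*(w 0).im))
    ((u 0).re^2+(u 1).re^2+(u 2).re^2+(u 0).im^2+(u 1).im^2+(u 2).im^2)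
    ((w 0).re^2+(w 1).re^2+(w 2).re^2+(w 0).im^2+(w 1).im^2+(w 2).im^2)
    (by positivity) (by positivity)
    (cross_bound (u 0).re (u 1).re (u 2).re (u 0).im (u 1).im (u 2).im)
    (cross_bound (w 0).re (w 1).re (w 2).re (w 0).im (w 1).im (w 2).im)
  linarith [h]
end

section
/- Let X be a Polish space, Y a metrizable space, and f : X → Y a continuous proper surjection, with X additionally locally compact (hence σ-compact). Then f admits a Borel-measurable right inverse, i.e. there exists a Borel map s : Y → X with f ∘ s = id_Y. -/
open Set Function TopologicalSpace

namespace Stmt17Aux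

variable {X Y : Type*} [TopologicalSpace X] [TopologicalSpace Y]

/-- The decreasing sequence of "argmin" sets used for the lexicographic-minimum selection. -/
noncomputable def C (f : X → Y) (u : ℕ → X → ℝ) : ℕ → Y → Set X
  | 0, y => f ⁻¹' {y}
  | (k + 1), y => {x ∈ C f u k y | u k x = sInf (u k '' C f u k y)}

/-- The successive minima. -/
noncomputable def m (f : X → Y) (u : ℕ → X → ℝ) (k : ℕ) (y : Y) : ℝ :=
  sInf (u k '' C f u k y)

variable {f : X → Y} {u : ℕ → X → ℝ}

theorem C_succ (k : ℕ) (y : Y) :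
    C f u (k + 1) y = {x ∈ C f u k y | u k x = m f u k y} := rfl

theorem C_succ_subset (k : ℕ) (y : Y) : C f u (k + 1) y ⊆ C f u k y :=
  fun _ hx => hx.1

theorem C_antitone {j k : ℕ} (h : j ≤ k) (y : Y) : C f u k y ⊆ C f u j y := by
  induction k with
  | zero => simpa [Nat.le_zero.1 h] using Subset.rfl
  | succ k ih =>
    rcases Nat.lt_or_ge j (k + 1) with hj | hj
    · exact (C_succ_subset k y).trans (ih (Nat.lt_succ_iff.1 hj))
    · have : j = k + 1 := le_antisymm h hj
      simpa [this] using Subset.rfl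

theorem C_subset_fiber (k : ℕ) (y : Y) : C f u k y ⊆ f ⁻¹' {y} :=
  C_antitone (Nat.zero_le k) y

theorem u_eq_m_of_mem {k i : ℕ} (hik : i < k) {y : Y} {x : X} (hx : x ∈ C f u k y) :
    u i x = m f u i y :=
  (C_antitone hik y hx).2

/-- Compactness, nonemptiness and closedness of the sets `C f u k y`. -/
theorem C_isCompact_nonempty_isClosed (hu : ∀ k, Continuous (u k)) {y : Y}
    (hc : IsCompact (f ⁻¹' {y})) (hne : (f ⁻¹' {y}).Nonempty) (hcl : IsClosed (f ⁻¹' {y})) :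
    ∀ k, IsCompact (C f u k y) ∧ (C f u k y).Nonempty ∧ IsClosed (C f u k y) := by
  intro k
  induction k with
  | zero => exact ⟨hc, hne, hcl⟩
  | succ k ih =>
    obtain ⟨hkc, hkne, hkcl⟩ := ih
    obtain ⟨x₀, hx₀, hx₀min⟩ := hkc.exists_isMinOn hkne (hu k).continuousOn
    have hleast : IsLeast (u k '' C f u k y) (u k x₀) := by
      refine ⟨⟨x₀, hx₀, rfl⟩, ?_⟩
      rintro _ ⟨x, hx, rfl⟩
      exact hx₀min hx
    have hmval : m f u k y = u k x₀ := hleast.csInf_eq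
    have heq : C f u (k + 1) y = C f u k y ∩ (u k) ⁻¹' {m f u k y} := by
      rw [C_succ]; ext x; simp [and_comm]
    have hclnew : IsClosed (C f u (k + 1) y) := by
      rw [heq]
      exact hkcl.inter (isClosed_singleton.preimage (hu k))
    refine ⟨?_, ⟨x₀, ?_⟩, hclnew⟩
    · rw [heq]
      exact hkc.inter_right (isClosed_singleton.preimage (hu k))
    · exact ⟨hx₀, hmval.symm⟩

theorem m_le_of_mem (hu : ∀ k, Continuous (u k)) {k : ℕ} {y : Y}
    (hc : IsCompact (C f u k y)) {x : X} (hx : x ∈ C f u k y) : m f u k y ≤ u k x :=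
  csInf_le (hc.image (hu k)).bddBelow ⟨x, hx, rfl⟩

end Stmt17Aux

open Stmt17Aux

/-- A continuous proper surjection from a locally compact Polish space onto a metrizable
space admits a Borel-measurable right inverse. -/
theorem stmt17 {X Y : Type*} [TopologicalSpace X] [PolishSpace X] [LocallyCompactSpace X]
    [MeasurableSpace X] [BorelSpace X]
    [TopologicalSpace Y] [TopologicalSpace.MetrizableSpace Y]
    [MeasurableSpace Y] [BorelSpace Y]
    (f : X → Y) (hcont : Continuous f) (hsurj : Function.Surjective f)
    (hproper : ∀ K : Set Y, IsCompact K → IsCompact (f ⁻¹' K)) :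
    ∃ s : Y → X, Measurable s ∧ f ∘ s = id := by
  classical
  rcases isEmpty_or_nonempty Y with hY | hY
  · exact ⟨fun y => isEmptyElim y, measurable_of_empty _, funext fun y => isEmptyElim y⟩
  haveI : Nonempty X := ⟨(hsurj (Classical.arbitrary Y)).choose⟩
  letI := upgradeIsCompletelyMetrizable X
  letI : MetricSpace Y := TopologicalSpace.metrizableSpaceMetric Y
  haveI : SigmaCompactSpace Y := by
    rw [← isSigmaCompact_univ_iff]
    have h := (isSigmaCompact_univ (X := X)).image hcont
    rwa [image_univ, hsurj.range_eq] at h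
  haveI : SecondCountableTopology Y := EMetric.secondCountable_of_sigmaCompact Y
  have hfp : IsProperMap f :=
    isProperMap_iff_isCompact_preimage.2 ⟨hcont, fun K hK => hproper K hK⟩
  -- a countable family of continuous functions separating the points of X
  set z : ℕ → X := TopologicalSpace.denseSeq X with hzdef
  have hzd : DenseRange z := TopologicalSpace.denseRange_denseSeq X
  set u : ℕ → X → ℝ := fun k x => dist x (z k) with hudef
  have hucont : ∀ k, Continuous (u k) := fun k => continuous_id.dist continuous_const
  set e : X → ℕ → ℝ := fun x k => u k x with hedef
  have he_cont : Continuous e := continuous_pi fun k => hucont k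
  have he_inj : Function.Injective e := by
    intro x x' h
    have hk : ∀ k, dist x (z k) = dist x' (z k) := fun k => congrFun h k
    have hle : ∀ δ : ℝ, 0 < δ → dist x x' ≤ 0 + δ := by
      intro δ hδ
      obtain ⟨k, hkd⟩ := Metric.denseRange_iff.1 hzd x (δ / 2) (by positivity)
      calc dist x x' ≤ dist x (z k) + dist (z k) x' := dist_triangle _ _ _
        _ = dist x (z k) + dist x' (z k) := by rw [dist_comm (z k) x']
        _ ≤ δ / 2 + δ / 2 := add_le_add hkd.le (by rw [← hk k]; exact hkd.le)
        _ = 0 + δ := by ring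
    have : dist x x' ≤ 0 := le_of_forall_pos_le_add hle
    exact eq_of_dist_eq_zero (le_antisymm this dist_nonneg)
  -- basic facts about fibers
  have hFc : ∀ y : Y, IsCompact (f ⁻¹' {y}) := fun y => hproper _ isCompact_singleton
  have hFne : ∀ y : Y, (f ⁻¹' {y}).Nonempty := fun y => hsurj y
  have hFcl : ∀ y : Y, IsClosed (f ⁻¹' {y}) := fun y => isClosed_singleton.preimage hcont
  have hC : ∀ (y : Y) (k : ℕ),
      IsCompact (C f u k y) ∧ (C f u k y).Nonempty ∧ IsClosed (C f u k y) :=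
    fun y => C_isCompact_nonempty_isClosed hucont (hFc y) (hFne y) (hFcl y)
  -- measurability of the successive minima
  have meas_m : ∀ k : ℕ, Measurable fun y => m f u k y := by
    intro k
    induction k using Nat.strong_induction_on with
    | _ k IH =>
    apply measurable_of_Iic
    intro a
    have hMS : MeasurableSet {y : Y | m f u k y ≤ a} := by
      set ε : ℕ → ℝ := fun n => 1 / (n + 1 : ℝ) with hεdef
      have hεpos : ∀ n, 0 < ε n := fun n => by positivity
      have hεanti : ∀ n, ε (n + 1) ≤ ε n := by
        intro n
        apply one_div_le_one_div_of_le (by positivity)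
        push_cast; linarith
      set W : ℕ → Set (X × (Fin k → ℝ)) :=
        fun n => {p | (∀ i : Fin k, u i p.1 ≤ p.2 i + ε n) ∧ u k p.1 ≤ a + ε n} with hWdef
      have hWcl : ∀ n, IsClosed (W n) := by
        intro n
        have hWeq : W n = (⋂ i : Fin k, {p : X × (Fin k → ℝ) | u i p.1 ≤ p.2 i + ε n}) ∩
            {p : X × (Fin k → ℝ) | u k p.1 ≤ a + ε n} := by
          ext p
          simp [hWdef, Set.mem_iInter]
        rw [hWeq]
        apply IsClosed.inter
        · exact isClosed_iInter fun i => isClosed_le ((hucont i).comp continuous_fst)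
            (((continuous_apply i).comp continuous_snd).add continuous_const)
        · exact isClosed_le ((hucont k).comp continuous_fst) continuous_const
      set S : ℕ → Set (Y × (Fin k → ℝ)) := fun n => (Prod.map f id) '' W n with hSdef
      have hScl : ∀ n, IsClosed (S n) :=
        fun n => (hfp.prodMap isProperMap_id).isClosedMap _ (hWcl n)
      set Φ : Y → Y × (Fin k → ℝ) := fun y => (y, fun i => m f u i y) with hΦdef
      have hΦm : Measurable Φ :=
        measurable_id.prodMk (measurable_pi_lambda _ fun i => IH i i.2)
      have hkey : {y : Y | m f u k y ≤ a} = ⋂ n, Φ ⁻¹' (S n) := by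
        ext y
        simp only [Set.mem_setOf_eq, Set.mem_iInter, Set.mem_preimage]
        constructor
        · intro hma n
          obtain ⟨x, hx⟩ := (hC y (k + 1)).2.1
          have hfx : f x = y := C_subset_fiber (k + 1) y hx
          refine ⟨(x, fun i => m f u i y), ⟨?_, ?_⟩, ?_⟩
          · intro i
            have : u i x = m f u i y := u_eq_m_of_mem (Nat.lt_succ_of_lt i.2) hx
            rw [this]
            exact le_add_of_nonneg_right (hεpos n).le
          · have : u k x = m f u k y := u_eq_m_of_mem (Nat.lt_succ_self k) hx
            rw [this]
            exact le_trans hma (le_add_of_nonneg_right (hεpos n).le)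
          · simp [Prod.map, hfx, hΦdef]
        · intro hy
          set T : ℕ → Set X := fun n =>
            f ⁻¹' {y} ∩ {x | (∀ i : Fin k, u i x ≤ m f u i y + ε n) ∧ u k x ≤ a + ε n}
            with hTdef
          have hTne : ∀ n, (T n).Nonempty := by
            intro n
            obtain ⟨p, hpW, hpeq⟩ := hy n
            have hp1 : f p.1 = y := congrArg Prod.fst hpeq
            have hp2 : p.2 = fun i : Fin k => m f u i y := congrArg Prod.snd hpeq
            refine ⟨p.1, ?_, ?_, ?_⟩
            · simpa using hp1
            · intro i
              have h := hpW.1 i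
              rw [hp2] at h
              exact h
            · exact hpW.2
          have hTeq : ∀ n, T n = f ⁻¹' {y} ∩
              ((⋂ i : Fin k, {x : X | u i x ≤ m f u i y + ε n}) ∩
                {x : X | u k x ≤ a + ε n}) := by
            intro n
            ext x
            simp [hTdef, Set.mem_iInter, and_assoc]
          have hTcl' : ∀ n, IsClosed ((⋂ i : Fin k, {x : X | u i x ≤ m f u i y + ε n}) ∩
              {x : X | u k x ≤ a + ε n}) := by
            intro n
            apply IsClosed.inter
            · exact isClosed_iInter fun i => isClosed_le (hucont i) continuous_const
            · exact isClosed_le (hucont k) continuous_const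
          have hTcl : ∀ n, IsClosed (T n) := fun n => by
            rw [hTeq n]; exact (hFcl y).inter (hTcl' n)
          have hTsub : ∀ n, T (n + 1) ⊆ T n := by
            intro n x hx
            refine ⟨hx.1, fun i => le_trans (hx.2.1 i) (by linarith [hεanti n]),
              le_trans (hx.2.2) (by linarith [hεanti n])⟩
          have hT0c : IsCompact (T 0) := by
            rw [hTeq 0]; exact (hFc y).inter_right (hTcl' 0)
          obtain ⟨x, hx⟩ :=
            IsCompact.nonempty_iInter_of_sequence_nonempty_isCompact_isClosed T hTsub hTne
              hT0c hTcl
          simp only [Set.mem_iInter] at hx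
          have hxF : x ∈ f ⁻¹' {y} := (hx 0).1
          have hxu : ∀ i : Fin k, u i x ≤ m f u i y := by
            intro i
            apply le_of_forall_pos_le_add
            intro δ hδ
            obtain ⟨n, hn⟩ := exists_nat_one_div_lt hδ
            exact le_trans ((hx n).2.1 i) (by
              have : ε n < δ := by simpa [hεdef] using hn
              linarith)
          have hxk : u k x ≤ a := by
            apply le_of_forall_pos_le_add
            intro δ hδ
            obtain ⟨n, hn⟩ := exists_nat_one_div_lt hδ
            exact le_trans ((hx n).2.2) (by
              have : ε n < δ := by simpa [hεdef] using hn
              linarith)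
          have hmem : ∀ j, j ≤ k → x ∈ C f u j y := by
            intro j
            induction j with
            | zero => intro _; exact hxF
            | succ j ihj =>
              intro hjk
              have hj : x ∈ C f u j y := ihj (Nat.le_of_succ_le hjk)
              have h1 : m f u j y ≤ u j x := m_le_of_mem hucont (hC y j).1 hj
              have h2 : u j x ≤ m f u j y := hxu ⟨j, hjk⟩
              exact ⟨hj, le_antisymm h2 h1⟩
          have hxCk : x ∈ C f u k y := hmem k le_rfl
          exact le_trans (m_le_of_mem hucont (hC y k).1 hxCk) hxk
      rw [hkey]
      exact MeasurableSet.iInter fun n => hΦm (hScl n).measurableSet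
    simpa [Set.preimage, Set.Iic] using hMS
  -- the selection
  have hInter : ∀ y : Y, (⋂ k, C f u k y).Nonempty := by
    intro y
    exact IsCompact.nonempty_iInter_of_sequence_nonempty_isCompact_isClosed _
      (fun k => C_succ_subset k y) (fun k => (hC y k).2.1) (hC y 0).1 (fun k => (hC y k).2.2)
  set s : Y → X := fun y => (hInter y).some with hsdef
  have hsmem : ∀ (y : Y) (k : ℕ), s y ∈ C f u k y := by
    intro y k
    have := (hInter y).some_mem
    rw [Set.mem_iInter] at this
    exact this k
  have hfs : ∀ y, f (s y) = y := fun y => hsmem y 0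
  have hsu : ∀ (y : Y) (k : ℕ), u k (s y) = m f u k y :=
    fun y k => (hsmem y (k + 1)).2
  have he_me : MeasurableEmbedding e := he_cont.measurableEmbedding he_inj
  have hes : e ∘ s = fun y => fun k => m f u k y :=
    funext fun y => funext fun k => hsu y k
  have hsm : Measurable s := by
    rw [← he_me.measurable_comp_iff, hes]
    exact measurable_pi_lambda _ fun k => meas_m k
  exact ⟨s, hsm, funext fun y => hfs y⟩
end
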